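/- Let T be a tree on a finite vertex set V with at least 4 vertices, and suppose that some four distinct vertices of T form a non-star shape. Then for every pair of distinct vertices i₁, i₂ of T there exist vertices i₃, i₄ such that i₁, i₂, i₃, i₄ are four distinct vertices forming a non-star shape. -/

import Mathlib

open Matrix

/-- A leaf of a graph: a vertex with exactly one neighbor. -/
def IsLeaf {V : Type*} (G : SimpleGraph V) (a : V) : Prop :=
  ∃! b : V, G.Adj a b

/-- `x` and `y` lie in a common connected component of `T` with `k` deleted
(the subgraph of `T` induced on `V \ {k}`). -/
def SameComp {V : Type*} (T : SimpleGraph V) (k x y : V) : Prop :=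
  ∃ (hx : x ≠ k) (hy : y ≠ k),
    (T.induce {v : V | v ≠ k}).Reachable ⟨x, hx⟩ ⟨y, hy⟩

/-- Some connected component of `T` with `k` deleted contains `x` and `y` but
neither `z` nor `w`. -/
def PairSplit {V : Type*} (T : SimpleGraph V) (k x y z w : V) : Prop :=
  SameComp T k x y ∧ ¬ SameComp T k x z ∧ ¬ SameComp T k x w

/-- Four distinct vertices form a non-star shape: there is a vertex `k` of `T`
such that some connected component of `T` with `k` deleted contains exactly two
of the four vertices. -/
def NonStar {V : Type*} (T : SimpleGraph V) (i₁ i₂ i₃ i₄ : V) : Prop :=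
  ∃ k : V,
    PairSplit T k i₁ i₂ i₃ i₄ ∨ PairSplit T k i₁ i₃ i₂ i₄ ∨ PairSplit T k i₁ i₄ i₂ i₃ ∨
    PairSplit T k i₂ i₃ i₁ i₄ ∨ PairSplit T k i₂ i₄ i₁ i₃ ∨ PairSplit T k i₃ i₄ i₁ i₂

section StarAux

variable {V : Type*} {T : SimpleGraph V} {k x y z : V}

lemma sameComp_refl (hx : x ≠ k) : SameComp T k x x := ⟨hx, hx, .refl _⟩

lemma SameComp.ne_left (h : SameComp T k x y) : x ≠ k := by obtain ⟨hx, -, -⟩ := h; exact hx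

lemma SameComp.ne_right (h : SameComp T k x y) : y ≠ k := by obtain ⟨-, hy, -⟩ := h; exact hy

lemma SameComp.symm (h : SameComp T k x y) : SameComp T k y x := by
  obtain ⟨hx, hy, hr⟩ := h; exact ⟨hy, hx, hr.symm⟩

lemma SameComp.trans (h : SameComp T k x y) (h' : SameComp T k y z) : SameComp T k x z := by
  obtain ⟨hx, hy, hr⟩ := h
  obtain ⟨hy', hz, hr'⟩ := h'
  exact ⟨hx, hz, hr.trans hr'⟩

lemma sameComp_adj (h : T.Adj x y) (hx : x ≠ k) (hy : y ≠ k) : SameComp T k x y :=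
  ⟨hx, hy, SimpleGraph.Adj.reachable (by exact h)⟩

lemma sameComp_of_walk (p : T.Walk x y) (hk : k ∉ p.support) : SameComp T k x y := by
  induction p with
  | nil =>
    exact sameComp_refl (fun hh => hk (by simp [hh]))
  | @cons a b c h q ih =>
    have hk' : k ∉ q.support := fun hh => hk (by simp [SimpleGraph.Walk.support_cons, hh])
    have ha : a ≠ k := fun hh => hk (by simp [SimpleGraph.Walk.support_cons, hh])
    have hb : b ≠ k := fun hh => hk' (hh ▸ q.start_mem_support)
    exact SameComp.trans (sameComp_adj h ha hb) (ih hk')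

lemma SameComp.exists_walk (h : SameComp T k x y) : ∃ p : T.Walk x y, k ∉ p.support := by
  obtain ⟨hx, hy, hr⟩ := h
  obtain ⟨q⟩ := hr
  refine ⟨q.map ⟨Subtype.val, fun h => h⟩, ?_⟩
  rw [SimpleGraph.Walk.support_map]
  intro hh
  obtain ⟨⟨a, ha⟩, -, heq⟩ := List.mem_map.mp hh
  exact ha heq

lemma edge_mem_of_walk {u v : V} (hT : T.IsTree) (huv : T.Adj u v) (p : T.Walk u v) :
    s(u, v) ∈ p.edges := by
  by_contra h
  have hb := (SimpleGraph.isAcyclic_iff_forall_edge_isBridge.mp hT.IsAcyclic)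
    (show s(u, v) ∈ T.edgeSet from huv)
  exact (SimpleGraph.isBridge_iff.mp hb)
    (SimpleGraph.reachable_delete_edges_iff_exists_walk.mpr ⟨p, h⟩)

lemma not_both {u v : V} (hT : T.IsTree) (huv : T.Adj u v) :
    ¬ (SameComp T v x u ∧ SameComp T u x v) := by
  rintro ⟨h1, h2⟩
  obtain ⟨p, hp⟩ := h1.exists_walk
  obtain ⟨q, hq⟩ := h2.exists_walk
  have hmem := edge_mem_of_walk hT huv (p.reverse.append q)
  rw [SimpleGraph.Walk.edges_append, List.mem_append] at hmem
  rcases hmem with h | h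
  · rw [SimpleGraph.Walk.edges_reverse, List.mem_reverse] at h
    exact hp (p.snd_mem_support_of_mem_edges h)
  · exact hq (q.fst_mem_support_of_mem_edges h)

lemma no_triangle {u v w : V} (hT : T.IsTree) (h1 : T.Adj u v) (h2 : T.Adj u w) (h3 : T.Adj v w) :
    False := by
  have := edge_mem_of_walk hT h1 (SimpleGraph.Walk.cons h2 (SimpleGraph.Walk.cons h3.symm .nil))
  simp only [SimpleGraph.Walk.edges_cons, SimpleGraph.Walk.edges_nil, List.mem_cons,
    List.not_mem_nil, or_false, Sym2.eq_iff] at this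
  rcases this with (⟨-, h⟩ | ⟨h, -⟩) | (⟨h, -⟩ | ⟨h, -⟩)
  · exact h3.ne h
  · exact h2.ne h
  · exact h2.ne h
  · exact h1.ne h

lemma side_trichotomy [DecidableEq V] {u v : V} (hT : T.IsTree) (huv : T.Adj u v)
    (hxu : x ≠ u) (hxv : x ≠ v) : SameComp T v x u ∨ SameComp T u x v := by
  obtain ⟨w⟩ := hT.isConnected x u
  obtain ⟨p, hp⟩ : ∃ p : T.Walk x u, p.IsPath := ⟨w.toPath, w.toPath.2⟩
  by_cases hv : v ∈ p.support
  · right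
    refine sameComp_of_walk (p.takeUntil v hv) ?_
    have hnd : p.support.Nodup := hp.support_nodup
    rw [← SimpleGraph.Walk.take_spec p hv, SimpleGraph.Walk.support_append] at hnd
    have hu2 : u ∈ (p.dropUntil v hv).support.tail := by
      have hend := (p.dropUntil v hv).end_mem_support
      rw [SimpleGraph.Walk.support_eq_cons, List.mem_cons] at hend
      rcases hend with h | h
      · exact absurd h huv.ne
      · exact h
    exact fun hu1 => (List.disjoint_of_nodup_append hnd) hu1 hu2
  · exact Or.inl (sameComp_of_walk p hv)

lemma exists_adj_sameComp (hT : T.IsTree) (hx : x ≠ k) :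
    ∃ a, T.Adj k a ∧ SameComp T k a x := by
  classical
  obtain ⟨w⟩ := hT.isConnected k x
  obtain ⟨p, hp⟩ : ∃ p : T.Walk k x, p.IsPath := ⟨w.toPath, w.toPath.2⟩
  cases p with
  | nil => exact absurd rfl hx.symm
  | @cons _ b _ h q =>
    rw [SimpleGraph.Walk.cons_isPath_iff] at hp
    exact ⟨b, h, sameComp_of_walk q hp.2⟩

lemma exists_adj_ne (h : SameComp T k x y) (hxy : x ≠ y) : ∃ b, T.Adj x b ∧ b ≠ k := by
  obtain ⟨p, hp⟩ := h.exists_walk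
  cases p with
  | nil => exact absurd rfl hxy
  | @cons _ b _ hadj q =>
    refine ⟨b, hadj, fun hh => hp ?_⟩
    rw [SimpleGraph.Walk.support_cons]
    exact List.mem_cons_of_mem _ (hh ▸ q.start_mem_support)

lemma extract (hT : T.IsTree) {w : V} (hxy : x ≠ y) (hzw : z ≠ w)
    (h : PairSplit T k x y z w) :
    ∃ u v u' v', T.Adj u v ∧ T.Adj u u' ∧ u' ≠ v ∧ T.Adj v v' ∧ v' ≠ u := by
  obtain ⟨hsc, hnz, hnw⟩ := h
  obtain ⟨a, hka, hax⟩ := exists_adj_sameComp hT hsc.ne_left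
  have hstep : ∃ t, a ≠ t ∧ SameComp T k a t := by
    by_cases hax' : a = x
    · exact ⟨y, fun hh => hxy (hax'.symm.trans hh), SameComp.trans hax hsc⟩
    · exact ⟨x, hax', hax⟩
  obtain ⟨t, hta, hat⟩ := hstep
  obtain ⟨b, hab, hbk⟩ := exists_adj_ne hat hta
  have hs : ∃ s, s ≠ k ∧ ¬ SameComp T k x s := by
    by_cases hzk : z = k
    · exact ⟨w, fun hh => hzw (hzk.trans hh.symm), hnw⟩
    · exact ⟨z, hzk, hnz⟩
  obtain ⟨s, hsk, hns⟩ := hs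
  obtain ⟨c, hkc, hcs⟩ := exists_adj_sameComp hT hsk
  have hca : c ≠ a := by
    rintro rfl
    exact hns (SameComp.trans hax.symm hcs)
  exact ⟨a, k, b, c, hka.symm, hab, hbk, hkc, hca⟩

lemma caseA (hT : T.IsTree) {u v v' i₁ i₂ : V} (huv : T.Adj u v)
    (hvv' : T.Adj v v') (hv'u : v' ≠ u)
    (h1 : SameComp T v i₁ u) (h2 : SameComp T v i₂ u) :
    ∃ i₃ i₄ : V, i₁ ≠ i₃ ∧ i₁ ≠ i₄ ∧ i₂ ≠ i₃ ∧ i₂ ≠ i₄ ∧ i₃ ≠ i₄ ∧ NonStar T i₁ i₂ i₃ i₄ := by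
  have hVv' : SameComp T u v' v := sameComp_adj hvv'.symm hv'u (Ne.symm huv.ne)
  have hUne : ∀ x, SameComp T v x u → x ≠ v' := by
    rintro x hx rfl
    exact not_both hT huv ⟨hx, hVv'⟩
  refine ⟨v, v', h1.ne_left, hUne i₁ h1, h2.ne_left, hUne i₂ h2, hvv'.ne,
    v, Or.inl ⟨?_, ?_, ?_⟩⟩
  · exact SameComp.trans h1 h2.symm
  · exact fun h => h.ne_right rfl
  · intro h
    exact not_both hT huv ⟨SameComp.trans h.symm h1, hVv'⟩

lemma caseC (hT : T.IsTree) {u v u' v' i₁ i₂ : V} (huv : T.Adj u v) (huu' : T.Adj u u')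
    (hu'v : u' ≠ v) (hvv' : T.Adj v v') (hv'u : v' ≠ u)
    (h1 : SameComp T v i₁ u) (h2 : SameComp T u i₂ v) :
    ∃ i₃ i₄ : V, i₁ ≠ i₃ ∧ i₁ ≠ i₄ ∧ i₂ ≠ i₃ ∧ i₂ ≠ i₄ ∧ i₃ ≠ i₄ ∧ NonStar T i₁ i₂ i₃ i₄ := by
  have hUu' : SameComp T v u' u := (sameComp_adj huu' huv.ne hu'v).symm
  have hVv' : SameComp T u v' v := sameComp_adj hvv'.symm hv'u (Ne.symm huv.ne)
  have hu'v' : u' ≠ v' := by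
    rintro rfl
    exact not_both hT huv ⟨hUu', hVv'⟩
  have hUne : ∀ x, SameComp T v x u → ∀ y, SameComp T u y v → x ≠ y := by
    rintro x hx y hy rfl
    exact not_both hT huv ⟨hx, hy⟩
  by_cases hi2v : i₂ = v
  · subst hi2v
    by_cases hi1u : i₁ = u
    · subst hi1u
      refine ⟨v', u', Ne.symm hv'u, huu'.ne, hvv'.ne, Ne.symm hu'v, Ne.symm hu'v',
        i₁, Or.inr (Or.inr (Or.inr (Or.inl ⟨?_, ?_, ?_⟩)))⟩
      · exact hVv'.symm
      · exact fun h => h.ne_right rfl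
      · intro h
        exact not_both hT huv ⟨hUu', h.symm⟩
    · refine ⟨v', u, hUne i₁ h1 v' hVv', hi1u, hvv'.ne, Ne.symm huv.ne, hv'u,
        u, Or.inr (Or.inr (Or.inr (Or.inl ⟨?_, ?_, ?_⟩)))⟩
      · exact hVv'.symm
      · intro h
        exact not_both hT huv ⟨h1, h.symm⟩
      · exact fun h => h.ne_right rfl
  · by_cases hi1u : i₁ = u
    · subst hi1u
      refine ⟨u', v, huu'.ne, huv.ne, Ne.symm (hUne u' hUu' i₂ h2), hi2v, hu'v,
        v, Or.inr (Or.inl ⟨?_, ?_, ?_⟩)⟩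
      · exact hUu'.symm
      · intro h
        exact not_both hT huv ⟨h.symm, h2⟩
      · exact fun h => h.ne_right rfl
    · refine ⟨u, v, hi1u, h1.ne_left, Ne.symm (hUne u (sameComp_refl huv.ne) i₂ h2), hi2v,
        huv.ne, v, Or.inr (Or.inl ⟨?_, ?_, ?_⟩)⟩
      · exact h1
      · intro h
        exact not_both hT huv ⟨SameComp.trans h.symm h1, h2⟩
      · exact fun h => h.ne_right rfl

lemma construct [DecidableEq V] (hT : T.IsTree) {u v u' v' : V} (huv : T.Adj u v)
    (huu' : T.Adj u u') (hu'v : u' ≠ v) (hvv' : T.Adj v v') (hv'u : v' ≠ u) (i₁ i₂ : V) :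
    ∃ i₃ i₄ : V, i₁ ≠ i₃ ∧ i₁ ≠ i₄ ∧ i₂ ≠ i₃ ∧ i₂ ≠ i₄ ∧ i₃ ≠ i₄ ∧ NonStar T i₁ i₂ i₃ i₄ := by
  have total : ∀ x : V, SameComp T v x u ∨ SameComp T u x v := by
    intro x
    by_cases hxu : x = u
    · subst hxu; exact Or.inl (sameComp_refl huv.ne)
    by_cases hxv : x = v
    · subst hxv; exact Or.inr (sameComp_refl (Ne.symm huv.ne))
    · exact side_trichotomy hT huv hxu hxv
  rcases total i₁ with h1 | h1 <;> rcases total i₂ with h2 | h2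
  · exact caseA hT huv hvv' hv'u h1 h2
  · exact caseC hT huv huu' hu'v hvv' hv'u h1 h2
  · exact caseC hT huv.symm hvv' hv'u huu' hu'v h1 h2
  · exact caseA hT huv.symm huu' hu'v h1 h2

end StarAux

theorem stmt_19 {V : Type*} [Fintype V] [DecidableEq V]
    (T : SimpleGraph V) (hTree : T.IsTree) (hcard : 4 ≤ Fintype.card V)
    (hex : ∃ a b c d : V, a ≠ b ∧ a ≠ c ∧ a ≠ d ∧ b ≠ c ∧ b ≠ d ∧ c ≠ d ∧
      NonStar T a b c d) :
    ∀ i₁ i₂ : V, i₁ ≠ i₂ →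
      ∃ i₃ i₄ : V, i₁ ≠ i₃ ∧ i₁ ≠ i₄ ∧ i₂ ≠ i₃ ∧ i₂ ≠ i₄ ∧ i₃ ≠ i₄ ∧
        NonStar T i₁ i₂ i₃ i₄ := by
  obtain ⟨a, b, c, d, hab, hac, had, hbc, hbd, hcd, k, hk⟩ := hex
  have hstruct : ∃ u v u' v', T.Adj u v ∧ T.Adj u u' ∧ u' ≠ v ∧ T.Adj v v' ∧ v' ≠ u := by
    rcases hk with h | h | h | h | h | h
    · exact extract hTree hab hcd h
    · exact extract hTree hac hbd h
    · exact extract hTree had hbc h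
    · exact extract hTree hbc had h
    · exact extract hTree hbd hac h
    · exact extract hTree hcd hab h
  obtain ⟨u, v, u', v', huv, huu', hu'v, hvv', hv'u⟩ := hstruct
  intro i₁ i₂ _
  exact construct hTree huv huu' hu'v hvv' hv'u i₁ i₂
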